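/- arXiv:2512.02160 — 2 statements merged into one kernel-verified Lean document; each statement's English description precedes it below -/
import Mathlib

section
/- If the ensemble is second-order exchangeable with the truth, i.e. μ_x = μ_y, σ_x² = σ_y², and c = γ, then the Spread-Error relationship holds: E[(X̄ − Y)²] = ((n+1)/n) E[S_e²]. -/
open MeasureTheory

/-- Covariance of two real random variables. -/
noncomputable def cov {Ω : Type*} [MeasurableSpace Ω] (μ : Measure Ω) (f g : Ω → ℝ) : ℝ :=
  ∫ ω, (f ω - ∫ x, f x ∂μ) * (g ω - ∫ x, g x ∂μ) ∂μ

/-- Ensemble mean. -/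
noncomputable def ensMean {Ω : Type*} {n : ℕ} (X : Fin n → Ω → ℝ) (ω : Ω) : ℝ :=
  (∑ i, X i ω) / n

/-- Unbiased ensemble variance. -/
noncomputable def ensVar {Ω : Type*} {n : ℕ} (X : Fin n → Ω → ℝ) (ω : Ω) : ℝ :=
  (∑ i, (X i ω - ensMean X ω) ^ 2) / ((n : ℝ) - 1)

/-- The Spread-Error statistic `δ_τ = ((n+1)/n) S_e² − (X̄ − Y)²`. -/
noncomputable def spreadError {Ω : Type*} {n : ℕ} (X : Fin n → Ω → ℝ) (Y : Ω → ℝ) (ω : Ω) : ℝ :=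
  (((n : ℝ) + 1) / n) * ensVar X ω - (ensMean X ω - Y ω) ^ 2

lemma integrable_mul_of_L2' {Ω : Type*} [MeasurableSpace Ω] {μ : Measure Ω}
    {f g : Ω → ℝ} (hf : MemLp f 2 μ) (hg : MemLp g 2 μ) :
    Integrable (fun ω => f ω * g ω) μ := by
  have h : MemLp (f • g) 1 μ := by
    haveI : ENNReal.HolderTriple 2 2 1 := ⟨by
      rw [inv_one]
      exact ENNReal.inv_two_add_inv_two⟩
    exact hg.smul hf
  rw [memLp_one_iff_integrable] at h
  exact h

lemma cov_eq_integral_mul' {Ω : Type*} [MeasurableSpace Ω] {μ : Measure Ω}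
    [IsProbabilityMeasure μ] {f g : Ω → ℝ} (hf : MemLp f 2 μ) (hg : MemLp g 2 μ) :
    cov μ f g = (∫ ω, f ω * g ω ∂μ) - (∫ ω, f ω ∂μ) * (∫ ω, g ω ∂μ) := by
  have hfi : Integrable f μ := hf.integrable one_le_two
  have hgi : Integrable g μ := hg.integrable one_le_two
  have hfg : Integrable (fun ω => f ω * g ω) μ := integrable_mul_of_L2' hf hg
  set a := ∫ ω, f ω ∂μ
  set b := ∫ ω, g ω ∂μ
  have hrw : (fun ω => (f ω - a) * (g ω - b)) =
      fun ω => f ω * g ω - (a * g ω + (b * f ω - a * b)) := by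
    funext ω; ring
  have hg1 : Integrable (fun ω => a * g ω) μ := hgi.const_mul a
  have hg3 : Integrable (fun ω => b * f ω) μ := hfi.const_mul b
  have hg2 : Integrable (fun ω => b * f ω - a * b) μ := by
    exact hg3.sub (integrable_const _)
  have h2 : Integrable (fun ω => a * g ω + (b * f ω - a * b)) μ := by
    exact hg1.add hg2
  rw [cov, hrw, integral_sub hfg h2, integral_add hg1 hg2,
    integral_sub hg3 (integrable_const _),
    integral_const_mul, integral_const_mul, integral_const]
  simp
  ring

/-- If the ensemble is second-order exchangeable with the truth (`μ_x = μ_y`, `σ_x² = σ_y²`,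
`c = γ`), then the Spread-Error relationship holds: `E[(X̄ − Y)²] = ((n+1)/n) E[S_e²]`. -/
theorem spread_error_relationship_of_exchangeable
    {Ω : Type*} [MeasurableSpace Ω] (μ : Measure Ω) [IsProbabilityMeasure μ]
    (n : ℕ) (hn : 2 ≤ n) (X : Fin n → Ω → ℝ) (Y : Ω → ℝ)
    (hL2 : ∀ i, MemLp (X i) 2 μ) (hYL2 : MemLp Y 2 μ)
    (μx σx2 c μy σy2 γ : ℝ) (hσx2 : 0 < σx2) (hσy2 : 0 < σy2)
    (hmean : ∀ i, ∫ ω, X i ω ∂μ = μx)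
    (hvar : ∀ i, cov μ (X i) (X i) = σx2)
    (hcov : ∀ i j, i ≠ j → cov μ (X i) (X j) = c)
    (hmeanY : ∫ ω, Y ω ∂μ = μy)
    (hvarY : cov μ Y Y = σy2)
    (hcovXY : ∀ i, cov μ (X i) Y = γ)
    (h1 : μx = μy) (h2 : σx2 = σy2) (h3 : c = γ) :
    ∫ ω, (ensMean X ω - Y ω) ^ 2 ∂μ =
      (((n : ℝ) + 1) / n) * ∫ ω, ensVar X ω ∂μ := by
  classical
  have hn2 : (2:ℝ) ≤ (n:ℝ) := by exact_mod_cast hn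
  have hn0 : (n:ℝ) ≠ 0 := by linarith
  have hn1 : (n:ℝ) - 1 ≠ 0 := by linarith
  set A := σx2 + μx * μx with hA
  set B := c + μx * μx with hB
  set G := γ + μx * μy with hG
  set D := σy2 + μy * μy with hD
  -- second moments
  have momXX : ∀ i j, ∫ ω, X i ω * X j ω ∂μ = if i = j then A else B := by
    intro i j
    by_cases h : i = j
    · subst h
      have hc := cov_eq_integral_mul' (hL2 i) (hL2 i)
      rw [hvar i, hmean i] at hc
      rw [if_pos rfl, hA]; linarith
    · have hc := cov_eq_integral_mul' (hL2 i) (hL2 j)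
      rw [hcov i j h, hmean i, hmean j] at hc
      rw [if_neg h, hB]; linarith
  have momXY : ∀ i, ∫ ω, X i ω * Y ω ∂μ = G := by
    intro i
    have hc := cov_eq_integral_mul' (hL2 i) hYL2
    rw [hcovXY i, hmean i, hmeanY] at hc; rw [hG]; linarith
  have momYY : ∫ ω, Y ω * Y ω ∂μ = D := by
    have hc := cov_eq_integral_mul' hYL2 hYL2
    rw [hvarY, hmeanY] at hc; rw [hD]; linarith
  -- integrability
  have hXX : ∀ i j, Integrable (fun ω => X i ω * X j ω) μ := fun i j =>
    integrable_mul_of_L2' (hL2 i) (hL2 j)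
  have hXY : ∀ i, Integrable (fun ω => X i ω * Y ω) μ := fun i =>
    integrable_mul_of_L2' (hL2 i) hYL2
  have hYY : Integrable (fun ω => Y ω * Y ω) μ := integrable_mul_of_L2' hYL2 hYL2
  have hDS : Integrable (fun ω => ∑ i, ∑ j, X i ω * X j ω) μ :=
    integrable_finset_sum _ fun i _ => integrable_finset_sum _ fun j _ => hXX i j
  have hSY : Integrable (fun ω => ∑ i, X i ω * Y ω) μ :=
    integrable_finset_sum _ fun i _ => hXY i
  have hQ : Integrable (fun ω => ∑ i, X i ω * X i ω) μ :=
    integrable_finset_sum _ fun i _ => hXX i i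
  -- values of the basic integrals
  have intDS : ∫ ω, (∑ i, ∑ j, X i ω * X j ω) ∂μ = n * A + (n * ((n:ℝ)-1)) * B := by
    rw [integral_finset_sum _ fun i _ => integrable_finset_sum _ fun j _ => hXX i j]
    have hrow : ∀ i ∈ Finset.univ, (∫ ω, (∑ j, X i ω * X j ω) ∂μ) = A + ((n:ℝ)-1) * B := by
      intro i _
      rw [integral_finset_sum _ fun j _ => hXX i j]
      have h1 : ∀ j ∈ Finset.univ,
          ∫ ω, X i ω * X j ω ∂μ = (if i = j then A - B else 0) + B := by
        intro j _; rw [momXX i j]; split <;> ring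
      rw [Finset.sum_congr rfl h1, Finset.sum_add_distrib, Finset.sum_ite_eq, Finset.sum_const]
      simp [Finset.card_univ]
      ring
    rw [Finset.sum_congr rfl hrow, Finset.sum_const]
    simp [Finset.card_univ]
    ring
  have intSY : ∫ ω, (∑ i, X i ω * Y ω) ∂μ = n * G := by
    rw [integral_finset_sum _ fun i _ => hXY i,
      Finset.sum_congr rfl fun i _ => momXY i, Finset.sum_const]
    simp [Finset.card_univ]
  have intQ : ∫ ω, (∑ i, X i ω * X i ω) ∂μ = n * A := by
    have h1 : ∀ i ∈ Finset.univ, ∫ ω, X i ω * X i ω ∂μ = A := fun i _ => by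
      simp [momXX i i]
    rw [integral_finset_sum _ fun i _ => hXX i i, Finset.sum_congr rfl h1, Finset.sum_const]
    simp [Finset.card_univ]
  -- rewrite the squared error pointwise
  have hLfun : (fun ω => (ensMean X ω - Y ω) ^ 2) =
      fun ω => (∑ i, ∑ j, X i ω * X j ω) * (((n:ℝ)^2)⁻¹) -
        ((∑ i, X i ω * Y ω) * (2/(n:ℝ)) - Y ω * Y ω) := by
    funext ω
    have e1 : (∑ i, ∑ j, X i ω * X j ω) = (∑ i, X i ω) * (∑ j, X j ω) :=
      (Finset.sum_mul_sum _ _ _ _).symm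
    have e2 : (∑ i, X i ω * Y ω) = (∑ i, X i ω) * Y ω := by
      rw [← Finset.sum_mul]
    rw [e1, e2, ensMean]
    field_simp
    ring
  have i1 : Integrable (fun ω => (∑ i, ∑ j, X i ω * X j ω) * (((n:ℝ)^2)⁻¹)) μ :=
    hDS.mul_const _
  have i2 : Integrable (fun ω => (∑ i, X i ω * Y ω) * (2/(n:ℝ))) μ := hSY.mul_const _
  have i3 : Integrable (fun ω => (∑ i, X i ω * Y ω) * (2/(n:ℝ)) - Y ω * Y ω) μ := by
    exact i2.sub hYY
  have hLint : ∫ ω, (ensMean X ω - Y ω) ^ 2 ∂μ =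
      (n * A + (n * ((n:ℝ)-1)) * B) * (((n:ℝ)^2)⁻¹) - ((n * G) * (2/(n:ℝ)) - D) := by
    rw [hLfun, integral_sub i1 i3, integral_sub i2 hYY, integral_mul_const,
      integral_mul_const, intDS, intSY, momYY]
  -- rewrite the ensemble variance pointwise
  have hVfun : (fun ω => ensVar X ω) =
      fun ω => (∑ i, X i ω * X i ω) * (((n:ℝ)-1))⁻¹ -
        (∑ i, ∑ j, X i ω * X j ω) * (((n:ℝ)*((n:ℝ)-1))⁻¹) := by
    funext ω
    have e1 : (∑ i, ∑ j, X i ω * X j ω) = (∑ i, X i ω) * (∑ j, X j ω) :=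
      (Finset.sum_mul_sum _ _ _ _).symm
    have e2 : ∑ i, (X i ω - ensMean X ω)^2
        = (∑ i, X i ω * X i ω) - (2 * ensMean X ω) * (∑ i, X i ω)
          + (n:ℝ) * ensMean X ω ^ 2 := by
      have h1 : ∀ i ∈ Finset.univ, (X i ω - ensMean X ω)^2
          = X i ω * X i ω - (2 * ensMean X ω) * X i ω + ensMean X ω ^ 2 := by
        intro i _; ring
      rw [Finset.sum_congr rfl h1, Finset.sum_add_distrib, Finset.sum_sub_distrib,
        ← Finset.mul_sum, Finset.sum_const]
      simp [Finset.card_univ, nsmul_eq_mul]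
    rw [ensVar, e2, e1, ensMean]
    field_simp
    ring
  have j1 : Integrable (fun ω => (∑ i, X i ω * X i ω) * (((n:ℝ)-1))⁻¹) μ := hQ.mul_const _
  have j2 : Integrable
      (fun ω => (∑ i, ∑ j, X i ω * X j ω) * (((n:ℝ)*((n:ℝ)-1))⁻¹)) μ := hDS.mul_const _
  have intV : ∫ ω, ensVar X ω ∂μ = A - B := by
    rw [hVfun, integral_sub j1 j2, integral_mul_const, integral_mul_const, intQ, intDS]
    field_simp
    ring
  rw [hLint, intV, hA, hB, hG, hD, ← h1, ← h2, ← h3]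
  field_simp
  ring
end

section
/- Additive inflation breaks the predictability condition: under the additive-inflation assumptions (Z_i with E[Z_i] = 0, Var(Z_i) = σ_a² > 0, Cov(Z_i, Z_j) = 0 for i ≠ j, Cov(Z_i, X_j) = Cov(Z_i, Y) = 0), if c > 0 and r = R, then the inflated ensemble X̃_i = X_i + Z_i has inter-member correlation r̃ = c/(σ_x² + σ_a²) and member-truth correlation R̃ = γ/(σ_y √(σ_x² + σ_a²)) satisfying r̃/R̃ = σ_x/√(σ_x² + σ_a²) < 1, hence r̃ < R̃. -/
open MeasureTheory

section Aux

variable {Ω : Type*} [MeasurableSpace Ω] {μ : Measure Ω} [IsProbabilityMeasure μ]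

lemma int_mul {f g : Ω → ℝ} (hf : MemLp f 2 μ) (hg : MemLp g 2 μ) :
    Integrable (fun ω => f ω * g ω) μ := by
  have h1 := (hf.add hg).integrable_sq
  have h2 := hf.integrable_sq
  have h3 := hg.integrable_sq
  have he : (fun ω => f ω * g ω) = fun ω => (((f ω + g ω) ^ 2) - f ω ^ 2 - g ω ^ 2) / 2 := by
    ext ω; ring
  rw [he]
  exact (((h1.sub h2).sub h3)).div_const 2

lemma memLp_center {f : Ω → ℝ} (hf : MemLp f 2 μ) :
    MemLp (fun ω => f ω - ∫ x, f x ∂μ) 2 μ :=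
  hf.sub (memLp_const _)

omit [IsProbabilityMeasure μ] in
lemma cov_comm (f g : Ω → ℝ) : cov μ f g = cov μ g f := by
  unfold cov; simp_rw [mul_comm]

lemma cov_add_left {f f' g : Ω → ℝ} (hf : MemLp f 2 μ) (hf' : MemLp f' 2 μ)
    (hg : MemLp g 2 μ) :
    cov μ (fun ω => f ω + f' ω) g = cov μ f g + cov μ f' g := by
  unfold cov
  have hint : ∫ ω, (f ω + f' ω) ∂μ = (∫ ω, f ω ∂μ) + ∫ ω, f' ω ∂μ :=
    integral_add (hf.integrable one_le_two) (hf'.integrable one_le_two)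
  rw [hint, ← integral_add (int_mul (memLp_center hf) (memLp_center hg))
      (int_mul (memLp_center hf') (memLp_center hg))]
  congr 1; ext ω; ring

lemma cov_add_right {f g g' : Ω → ℝ} (hf : MemLp f 2 μ) (hg : MemLp g 2 μ)
    (hg' : MemLp g' 2 μ) :
    cov μ f (fun ω => g ω + g' ω) = cov μ f g + cov μ f g' := by
  rw [cov_comm, cov_add_left hg hg' hf, cov_comm g f, cov_comm g' f]

lemma cov_add_add {f f' g g' : Ω → ℝ} (hf : MemLp f 2 μ) (hf' : MemLp f' 2 μ)
    (hg : MemLp g 2 μ) (hg' : MemLp g' 2 μ) :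
    cov μ (fun ω => f ω + f' ω) (fun ω => g ω + g' ω) =
      cov μ f g + cov μ f g' + cov μ f' g + cov μ f' g' := by
  rw [cov_add_left hf hf' (show MemLp (fun ω => g ω + g' ω) 2 μ from hg.add hg'), cov_add_right hf hg hg', cov_add_right hf' hg hg']
  ring

end Aux

/-- Additive inflation breaks the predictability condition: with `σ_a² > 0`, `c > 0`, `r = R`,
the inflated ensemble `X̃_i = X_i + Z_i` has inter-member correlation `r̃ = c/(σ_x²+σ_a²)` and
member-truth correlation `R̃ = γ/(σ_y √(σ_x²+σ_a²))` with
`r̃/R̃ = σ_x/√(σ_x²+σ_a²) < 1`, hence `r̃ < R̃`. -/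
theorem additive_inflation_breaks_predictability
    {Ω : Type*} [MeasurableSpace Ω] (μ : Measure Ω) [IsProbabilityMeasure μ]
    (n : ℕ) (hn : 2 ≤ n) (X Z : Fin n → Ω → ℝ) (Y : Ω → ℝ)
    (hL2 : ∀ i, MemLp (X i) 2 μ) (hYL2 : MemLp Y 2 μ) (hZL2 : ∀ i, MemLp (Z i) 2 μ)
    (μx σx2 c μy σy2 γ σa2 σx σy : ℝ) (hσx2 : 0 < σx2) (hσy2 : 0 < σy2)
    (hmean : ∀ i, ∫ ω, X i ω ∂μ = μx)
    (hvar : ∀ i, cov μ (X i) (X i) = σx2)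
    (hcov : ∀ i j, i ≠ j → cov μ (X i) (X j) = c)
    (hmeanY : ∫ ω, Y ω ∂μ = μy)
    (hvarY : cov μ Y Y = σy2)
    (hcovXY : ∀ i, cov μ (X i) Y = γ)
    (hZmean : ∀ i, ∫ ω, Z i ω ∂μ = 0)
    (hZvar : ∀ i, cov μ (Z i) (Z i) = σa2) (hσa2_pos : 0 < σa2)
    (hZcov : ∀ i j, i ≠ j → cov μ (Z i) (Z j) = 0)
    (hZX : ∀ i j, cov μ (Z i) (X j) = 0)
    (hZY : ∀ i, cov μ (Z i) Y = 0)
    (hσx : σx ^ 2 = σx2) (hσx_pos : 0 < σx)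
    (hσy : σy ^ 2 = σy2) (hσy_pos : 0 < σy)
    (hc_pos : 0 < c)
    (hrR : c / σx2 = γ / (σx * σy)) :
    (∀ i j, i ≠ j →
      cov μ (fun ω => X i ω + Z i ω) (fun ω => X j ω + Z j ω) /
        cov μ (fun ω => X i ω + Z i ω) (fun ω => X i ω + Z i ω) = c / (σx2 + σa2)) ∧
    (∀ i, cov μ (fun ω => X i ω + Z i ω) Y /
        (Real.sqrt (cov μ (fun ω => X i ω + Z i ω) (fun ω => X i ω + Z i ω)) * σy) =
      γ / (σy * Real.sqrt (σx2 + σa2))) ∧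
    (c / (σx2 + σa2)) / (γ / (σy * Real.sqrt (σx2 + σa2))) = σx / Real.sqrt (σx2 + σa2) ∧
    σx / Real.sqrt (σx2 + σa2) < 1 ∧
    c / (σx2 + σa2) < γ / (σy * Real.sqrt (σx2 + σa2)) := by
  -- variance of inflated member
  have hV : ∀ i, cov μ (fun ω => X i ω + Z i ω) (fun ω => X i ω + Z i ω) = σx2 + σa2 := by
    intro i
    rw [cov_add_add (hL2 i) (hZL2 i) (hL2 i) (hZL2 i), hvar i, hZvar i,
      cov_comm (X i) (Z i), hZX i i]
    ring
  have hC : ∀ i j, i ≠ j →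
      cov μ (fun ω => X i ω + Z i ω) (fun ω => X j ω + Z j ω) = c := by
    intro i j hij
    rw [cov_add_add (hL2 i) (hZL2 i) (hL2 j) (hZL2 j), hcov i j hij,
      cov_comm (X i) (Z j), hZX j i, hZX i j, hZcov i j hij]
    ring
  have hCY : ∀ i, cov μ (fun ω => X i ω + Z i ω) Y = γ := by
    intro i
    rw [cov_add_left (hL2 i) (hZL2 i) hYL2, hcovXY i, hZY i]
    ring
  set s := Real.sqrt (σx2 + σa2) with hs_def
  have hsum_pos : (0 : ℝ) < σx2 + σa2 := by linarith
  have hs_pos : 0 < s := Real.sqrt_pos.mpr hsum_pos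
  have hs2 : s ^ 2 = σx2 + σa2 := Real.sq_sqrt hsum_pos.le
  have hγval : γ = c * σy / σx := by
    have h1 : c / σx2 * (σx * σy) = γ := by
      rw [hrR]; field_simp
    rw [← h1, ← hσx]; field_simp
  have hγ_pos : 0 < γ := by
    rw [hγval]; positivity
  have hclaim3 : (c / (σx2 + σa2)) / (γ / (σy * s)) = σx / s := by
    rw [hγval, ← hs2]
    field_simp
  have hclaim4 : σx / s < 1 := by
    rw [div_lt_one hs_pos]
    nlinarith [hs2, hσx]
  refine ⟨?_, ?_, hclaim3, hclaim4, ?_⟩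
  · intro i j hij; rw [hC i j hij, hV i]
  · intro i; rw [hCY i, hV i, hs_def, mul_comm]
  · have hR_pos : 0 < γ / (σy * s) := by positivity
    calc c / (σx2 + σa2) = (σx / s) * (γ / (σy * s)) := by
          rw [← hclaim3]; field_simp
      _ < 1 * (γ / (σy * s)) := by
          exact mul_lt_mul_of_pos_right hclaim4 hR_pos
      _ = γ / (σy * s) := one_mul _
end
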